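/- arXiv:1701.03723 — 2 statements merged into one kernel-verified Lean document; each statement's English description precedes it below -/
import Mathlib

section
/- For integers r ≥ 0, m ≥ 1, n ≥ 1 and real p > 0, Σ_{1 ≤ k_m < ⋯ < k_1 ≤ n} 1/((k_1 + r)^p (k_2 + r)^p ⋯ (k_m + r)^p) = Σ_{i+j=m, i,j ≥ 0} (−1)^i · ζ_r^⋆({p}_i) · ζ_{n+r}({p}_j). -/
open Finset

/-- Multiple harmonic number `ζ_n({1}_m)`:
`ζ_n({1}_m) = ∑_{n ≥ n₁ > n₂ > ⋯ > n_m ≥ 1} 1/(n₁ ⋯ n_m)`, with `ζ_n({1}_0) = 1`. -/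
noncomputable def mhn : ℕ → ℕ → ℝ
  | _, 0 => 1
  | n, m + 1 => ∑ k ∈ Finset.Icc 1 n, mhn (k - 1) m / (k : ℝ)

/-- Multiple harmonic star number `ζ_n^⋆({1}_m)`:
`ζ_n^⋆({1}_m) = ∑_{n ≥ n₁ ≥ n₂ ≥ ⋯ ≥ n_m ≥ 1} 1/(n₁ ⋯ n_m)`, with `ζ_n^⋆({1}_0) = 1`. -/
noncomputable def mhsn : ℕ → ℕ → ℝ
  | _, 0 => 1
  | n, m + 1 => ∑ k ∈ Finset.Icc 1 n, mhsn k m / (k : ℝ)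

/-- Multiple harmonic number with repeated real argument `p`: `ζ_n({p}_m)`. -/
noncomputable def mhnP (p : ℝ) : ℕ → ℕ → ℝ
  | _, 0 => 1
  | n, m + 1 => ∑ k ∈ Finset.Icc 1 n, mhnP p (k - 1) m / (k : ℝ) ^ p

/-- Multiple harmonic star number with repeated real argument `p`: `ζ_n^⋆({p}_m)`. -/
noncomputable def mhsnP (p : ℝ) : ℕ → ℕ → ℝ
  | _, 0 => 1
  | n, m + 1 => ∑ k ∈ Finset.Icc 1 n, mhsnP p k m / (k : ℝ) ^ p

/-- Generalized harmonic number `H_n^{(p)} = ∑_{j=1}^n 1/j^p`. -/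
noncomputable def genH (p n : ℕ) : ℝ := ∑ j ∈ Finset.Icc 1 n, 1 / (j : ℝ) ^ p

/-- Auxiliary: `hypAux m n k = h_n^{(m+1)}(k)` for `k ≥ 1` (peel off the weak outer indices). -/
noncomputable def hypAux : ℕ → ℕ → ℕ → ℝ
  | 0, n, k => mhn n k
  | m + 1, n, k => ∑ j ∈ Finset.Icc 1 n, hypAux m j k

/-- Generalized hyperharmonic number `h_n^{(m)}(k)`, with the convention
`h_n^{(m)}(0) = C(m+n-1, m-1)`. -/
noncomputable def gh (n m k : ℕ) : ℝ :=
  if k = 0 then (Nat.choose (m + n - 1) (m - 1) : ℝ) else hypAux (m - 1) n k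

/-- Unsigned Stirling number of the first kind, defined by the standard recurrence,
equivalently by `x(x+1)⋯(x+n-1) = ∑_{k=0}^n [n; k] xᵏ`. -/
def stir1 : ℕ → ℕ → ℕ
  | 0, 0 => 1
  | 0, _ + 1 => 0
  | _ + 1, 0 => 0
  | n + 1, k + 1 => stir1 n k + n * stir1 n (k + 1)

/-- Multiple zeta value `ζ(p, {1}_m)`. -/
noncomputable def mzv (p m : ℕ) : ℝ := ∑' n : ℕ, mhn n m / (n + 1 : ℝ) ^ p

/-- Multiple zeta star value `ζ^⋆(p, {1}_m)`. -/
noncomputable def mzvStar (p m : ℕ) : ℝ := ∑' n : ℕ, mhsn (n + 1) m / (n + 1 : ℝ) ^ p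

/-- Riemann zeta value `ζ(p) = ∑_{n=1}^∞ 1/n^p`. -/
noncomputable def rz (p : ℕ) : ℝ := ∑' n : ℕ, 1 / (n + 1 : ℝ) ^ p

/-- `U_{m,r}(p) = ∑_{n=1}^∞ ζ_{n+r}({1}_m)/n^p`. -/
noncomputable def Usum (m r p : ℕ) : ℝ := ∑' n : ℕ, mhn (n + 1 + r) m / (n + 1 : ℝ) ^ p

/-- Strictly decreasing `q`-fold sum `Ā_q(n) = ∑_{1 ≤ k_q < ⋯ < k₁ ≤ n} a_{k₁}⋯a_{k_q}`,
with `Ā_0(n) = 1` (so `Ā_q(n) = 0` when `n < q`). -/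
def sdSum {R : Type*} [Semiring R] (a : ℕ → R) : ℕ → ℕ → R
  | _, 0 => 1
  | n, q + 1 => ∑ k ∈ Finset.Icc 1 n, a k * sdSum a (k - 1) q

/-- Weakly decreasing `q`-fold sum `A_q(n) = ∑_{1 ≤ k_q ≤ ⋯ ≤ k₁ ≤ n} a_{k₁}⋯a_{k_q}`,
with `A_0(n) = 1`. -/
def wdSum {R : Type*} [Semiring R] (a : ℕ → R) : ℕ → ℕ → R
  | _, 0 => 1
  | n, q + 1 => ∑ k ∈ Finset.Icc 1 n, a k * wdSum a k q

/-! For any sequence `a` (here `a_k = 1/k^p`), the numbers `sdSum a n m` are the coefficients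
of `∏_{k ≤ n} (1 + a_k X)` and `(-1)^i wdSum a n i` those of its inverse `∏_{k ≤ n} (1 + a_k X)⁻¹`.
Splitting `∏_{k ≤ n+r} (1 + a_k X)` into the factors with `k ≤ r` and those with `r < k ≤ n + r`
and multiplying by the inverse of the first part expresses the shifted product as
`∏_{k ≤ r} (1 + a_k X)⁻¹ · ∏_{k ≤ n+r} (1 + a_k X)`; comparing coefficients of `X^m` gives the
identity. -/

open PowerSeries

section SymmetricSums

variable {R : Type*}

@[simp]
lemma sdSum_zero_right [Semiring R] (a : ℕ → R) (n : ℕ) : sdSum a n 0 = 1 := rfl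

@[simp]
lemma sdSum_zero_succ [Semiring R] (a : ℕ → R) (m : ℕ) : sdSum a 0 (m + 1) = 0 := by
  simp [sdSum]

lemma sdSum_succ_succ [Semiring R] (a : ℕ → R) (n m : ℕ) :
    sdSum a (n + 1) (m + 1) = sdSum a n (m + 1) + a (n + 1) * sdSum a n m := by
  rw [sdSum, sdSum, sum_Icc_succ_top (by omega), add_tsub_cancel_right]

@[simp]
lemma wdSum_zero_right [Semiring R] (a : ℕ → R) (n : ℕ) : wdSum a n 0 = 1 := rfl

@[simp]
lemma wdSum_zero_succ [Semiring R] (a : ℕ → R) (m : ℕ) : wdSum a 0 (m + 1) = 0 := by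
  simp [wdSum]

lemma wdSum_succ_succ [Semiring R] (a : ℕ → R) (n m : ℕ) :
    wdSum a (n + 1) (m + 1) = wdSum a n (m + 1) + a (n + 1) * wdSum a (n + 1) m := by
  rw [wdSum, wdSum, sum_Icc_succ_top (by omega)]

def sdSeries [Semiring R] (a : ℕ → R) (n : ℕ) : R⟦X⟧ := mk (sdSum a n)

def sdSeriesInv [Ring R] (a : ℕ → R) (n : ℕ) : R⟦X⟧ := mk fun i => (-1) ^ i * wdSum a n i

lemma sdSeries_zero [Semiring R] (a : ℕ → R) : sdSeries a 0 = 1 := by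
  ext (_ | m) <;> simp [sdSeries, coeff_one]

lemma sdSeries_succ [CommSemiring R] (a : ℕ → R) (n : ℕ) :
    sdSeries a (n + 1) = sdSeries a n * (1 + C (a (n + 1)) * X) := by
  ext (_ | m) <;> simp [sdSeries, mul_add, ← mul_assoc, mul_comm, sdSum_succ_succ]

lemma sdSeriesInv_succ_mul [CommRing R] (a : ℕ → R) (n : ℕ) :
    sdSeriesInv a (n + 1) * (1 + C (a (n + 1)) * X) = sdSeriesInv a n := by
  ext (_ | m)
  · simp [sdSeriesInv]
  · rw [mul_add, mul_one, mul_comm (C _), ← mul_assoc, map_add, coeff_mul_C, coeff_succ_mul_X]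
    simp only [sdSeriesInv, coeff_mk, wdSum_succ_succ]
    ring

lemma sdSeriesInv_zero [Ring R] (a : ℕ → R) : sdSeriesInv a 0 = 1 := by
  ext (_ | m) <;> simp [sdSeriesInv, coeff_one]

lemma sdSeriesInv_mul_sdSeries [CommRing R] (a : ℕ → R) (n : ℕ) :
    sdSeriesInv a n * sdSeries a n = 1 := by
  induction n with
  | zero => rw [sdSeriesInv_zero, sdSeries_zero, one_mul]
  | succ n ih =>
    calc sdSeriesInv a (n + 1) * sdSeries a (n + 1)
        = sdSeriesInv a (n + 1) * (1 + C (a (n + 1)) * X) * sdSeries a n := by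
          rw [sdSeries_succ]; ring
      _ = 1 := by rw [sdSeriesInv_succ_mul, ih]

lemma sdSeries_add [CommSemiring R] (a : ℕ → R) (n r : ℕ) :
    sdSeries a (n + r) = sdSeries a r * sdSeries (fun k => a (k + r)) n := by
  induction n with
  | zero => rw [sdSeries_zero, mul_one, zero_add]
  | succ n ih =>
    rw [Nat.add_right_comm, sdSeries_succ, ih, sdSeries_succ, mul_assoc, Nat.add_right_comm]

theorem sdSum_shift_eq_sum [CommRing R] (a : ℕ → R) (r n m : ℕ) :
    sdSum (fun k => a (k + r)) n m =
      ∑ i ∈ range (m + 1), (-1) ^ i * wdSum a r i * sdSum a (n + r) (m - i) := by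
  have h : sdSeries (fun k => a (k + r)) n = sdSeriesInv a r * sdSeries a (n + r) := by
    rw [sdSeries_add, ← mul_assoc, sdSeriesInv_mul_sdSeries, one_mul]
  simpa [sdSeries, sdSeriesInv, coeff_mul, Nat.sum_antidiagonal_eq_sum_range_succ_mk, mul_assoc]
    using congrArg (coeff m) h

end SymmetricSums

lemma mhnP_eq_sdSum (p : ℝ) (n m : ℕ) : mhnP p n m = sdSum (fun k => 1 / (k : ℝ) ^ p) n m := by
  induction m generalizing n with
  | zero => rfl
  | succ m ih => simp only [mhnP, sdSum, ih, one_div_mul_eq_div]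

lemma mhsnP_eq_wdSum (p : ℝ) (n m : ℕ) : mhsnP p n m = wdSum (fun k => 1 / (k : ℝ) ^ p) n m := by
  induction m generalizing n with
  | zero => rfl
  | succ m ih => simp only [mhsnP, wdSum, ih, one_div_mul_eq_div]

theorem shifted_mhnP_eq_general (r m n : ℕ) (p : ℝ) :
    sdSum (fun k => 1 / ((k : ℝ) + r) ^ p) n m =
      ∑ i ∈ Finset.range (m + 1), (-1 : ℝ) ^ i * mhsnP p r i * mhnP p (n + r) (m - i) := by
  have shift : (fun k : ℕ => 1 / ((k : ℝ) + r) ^ p) = fun k => 1 / ((k + r : ℕ) : ℝ) ^ p := by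
    simp only [Nat.cast_add]
  simp only [shift, mhsnP_eq_wdSum, mhnP_eq_sdSum]
  exact sdSum_shift_eq_sum (fun k => 1 / (k : ℝ) ^ p) r n m

/-- Theorem 2.7, strict version: for `r ≥ 0`, `m, n ≥ 1` and real `p > 0`,
`∑_{1 ≤ k_m < ⋯ < k₁ ≤ n} 1/((k₁+r)^p ⋯ (k_m+r)^p) = ∑_{i+j=m} (-1)^i ζ_r^⋆({p}_i) ζ_{n+r}({p}_j)`. -/
theorem shifted_mhnP_eq (r m n : ℕ) (p : ℝ) (hm : 1 ≤ m) (hn : 1 ≤ n) (hp : 0 < p) :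
    sdSum (fun k => 1 / ((k : ℝ) + r) ^ p) n m =
      ∑ i ∈ Finset.range (m + 1), (-1 : ℝ) ^ i * mhsnP p r i * mhnP p (n + r) (m - i) :=
  shifted_mhnP_eq_general r m n p
end

section
/- For integers r ≥ 0, m ≥ 1 and n ≥ 1, the generalized hyperharmonic number satisfies h_n^{(r+1)}(m) = C(n+r, r) · Σ_{i+j=m, i,j ≥ 0} (−1)^i · ζ_r^⋆({1}_i) · ζ_{n+r}({1}_j), where C(n+r, r) is the binomial coefficient. -/
open Finset

/-!
`ζ_N({1}_j)` is the coefficient of `xʲ` in `∏_{k ≤ N} (1 + x/k)` and `(-1)ⁱ ζ_s^⋆({1}_i)` that of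
`xⁱ` in `∏_{k ≤ s} (1 + x/k)⁻¹`, so `altConv s N m` is the coefficient of `xᵐ` in the quotient of
these products. In particular it vanishes on the diagonal `s = N` for `m ≥ 1`, and it satisfies
two first-order recurrences, one in `N` and one in `s`. Combined with Pascal's rule and
`(N + 1) C(N, r) = (r + 1) C(N + 1, r + 1)`, they show that `C(n + r, r) · altConv r (n + r) m`
obeys the recurrence `h_n^{(r+1)} = h_{n-1}^{(r+1)} + h_n^{(r)}` of the hyperharmonic numbers;
the diagonal vanishing gives the initial values at `n = 0`.
-/

noncomputable def altConv (s N m : ℕ) : ℝ :=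
  ∑ i ∈ range (m + 1), (-1 : ℝ) ^ i * mhsn s i * mhn N (m - i)

lemma mhn_zero_succ (m : ℕ) : mhn 0 (m + 1) = 0 := by simp [mhn]

lemma mhsn_zero_succ (m : ℕ) : mhsn 0 (m + 1) = 0 := by simp [mhsn]

lemma mhn_succ_succ (n m : ℕ) : mhn (n + 1) (m + 1) = mhn n (m + 1) + mhn n m / (n + 1) := by
  rw [mhn, mhn, sum_Icc_succ_top (by omega)]
  push_cast
  simp

lemma mhsn_succ_succ (n m : ℕ) :
    mhsn (n + 1) (m + 1) = mhsn n (m + 1) + mhsn (n + 1) m / (n + 1) := by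
  rw [mhsn, mhsn, sum_Icc_succ_top (by omega)]
  push_cast
  simp

@[simp]
lemma altConv_zero (s N : ℕ) : altConv s N 0 = 1 := by simp [altConv, mhsn, mhn]

lemma altConv_zero_zero_succ (m : ℕ) : altConv 0 0 (m + 1) = 0 := by
  refine sum_eq_zero fun i _ => ?_
  rcases i with _ | i
  · simp [mhn_zero_succ]
  · simp [mhsn_zero_succ]

lemma altConv_harm_succ (s N m : ℕ) :
    altConv s (N + 1) (m + 1) = altConv s N (m + 1) + altConv s N m / (N + 1) := by
  have hterm : ∀ i ∈ range (m + 1),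
      (-1 : ℝ) ^ i * mhsn s i * mhn (N + 1) (m + 1 - i) =
        (-1 : ℝ) ^ i * mhsn s i * mhn N (m + 1 - i) +
          (-1 : ℝ) ^ i * mhsn s i * mhn N (m - i) / (N + 1) := by
    intro i hi
    rw [show m + 1 - i = m - i + 1 by grind, mhn_succ_succ]
    ring
  rw [altConv, altConv, altConv, sum_range_succ, sum_range_succ (n := m + 1), sum_congr rfl hterm,
    sum_add_distrib, ← sum_div]
  simp [mhn]
  ring

lemma altConv_star_succ (s N m : ℕ) :
    altConv (s + 1) N (m + 1) = altConv s N (m + 1) - altConv (s + 1) N m / (s + 1) := by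
  have hterm : ∀ i ∈ range (m + 1),
      (-1 : ℝ) ^ (i + 1) * mhsn (s + 1) (i + 1) * mhn N (m + 1 - (i + 1)) =
        (-1 : ℝ) ^ (i + 1) * mhsn s (i + 1) * mhn N (m + 1 - (i + 1)) -
          (-1 : ℝ) ^ i * mhsn (s + 1) i * mhn N (m - i) / (s + 1) := by
    intro i _
    rw [mhsn_succ_succ, Nat.add_sub_add_right]
    ring
  rw [altConv, altConv, altConv, sum_range_succ' _ (m + 1), sum_range_succ' _ (m + 1),
    sum_congr rfl hterm, sum_sub_distrib, ← sum_div]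
  simp [mhsn]
  ring

lemma altConv_self_succ (n m : ℕ) : altConv (n + 1) (n + 1) m = altConv n n m := by
  induction m with
  | zero => simp
  | succ m ih =>
    rw [altConv_star_succ, altConv_harm_succ, ih]
    ring

lemma altConv_self_succ_eq_zero (n m : ℕ) : altConv n n (m + 1) = 0 := by
  induction n with
  | zero => exact altConv_zero_zero_succ m
  | succ n ih => rw [altConv_self_succ, ih]

lemma choose_mul_altConv_succ (N r m : ℕ) :
    (N + 1).choose (r + 1) * altConv (r + 1) (N + 1) (m + 1) =
      N.choose (r + 1) * altConv (r + 1) N (m + 1) + N.choose r * altConv r N (m + 1) := by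
  have hpascal : ((N + 1).choose (r + 1) : ℝ) = N.choose r + N.choose (r + 1) := by
    rw [Nat.choose_succ_succ]
    push_cast
    ring
  have habsorb : ((N : ℝ) + 1) * N.choose r = (N + 1).choose (r + 1) * ((r : ℝ) + 1) := by
    exact_mod_cast Nat.add_one_mul_choose_eq N r
  have hcancel : ((N + 1).choose (r + 1) : ℝ) * (altConv (r + 1) N m / (N + 1)) =
      N.choose r * (altConv (r + 1) N m / (r + 1)) := by
    rw [mul_div_assoc', mul_div_assoc', div_eq_div_iff (by positivity) (by positivity)]
    linear_combination -altConv (r + 1) N m * habsorb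
  rw [altConv_harm_succ, altConv_star_succ r N m]
  linear_combination (altConv r N (m + 1) - altConv (r + 1) N m / (r + 1)) * hpascal + hcancel

lemma hypAux_succ_eq_choose_mul_altConv (m r n : ℕ) :
    hypAux r n (m + 1) = (n + r).choose r * altConv r (n + r) (m + 1) := by
  induction r generalizing n with
  | zero =>
    rw [hypAux, altConv, sum_range_succ' _ (m + 1)]
    simp [mhsn]
  | succ r ih =>
    induction n with
    | zero => simp [hypAux, altConv_self_succ_eq_zero]
    | succ n ihn =>
      rw [hypAux, sum_Icc_succ_top (by omega), ← hypAux, ihn, ih (n + 1),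
        show n + 1 + (r + 1) = n + r + 1 + 1 by omega, show n + 1 + r = n + r + 1 by omega,
        show n + (r + 1) = n + r + 1 by omega, choose_mul_altConv_succ (n + r + 1)]

theorem gh_eq_binom_mul_sum_general (r m n : ℕ) :
    gh n (r + 1) m =
      (Nat.choose (n + r) r : ℝ) *
        ∑ i ∈ Finset.range (m + 1), (-1 : ℝ) ^ i * mhsn r i * mhn (n + r) (m - i) := by
  rcases m with _ | m
  · simp [gh, mhsn, mhn, Nat.add_comm n r]
  · rw [gh, if_neg m.succ_ne_zero, Nat.add_sub_cancel, hypAux_succ_eq_choose_mul_altConv, altConv]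

/-- Theorem 2.9: for `r ≥ 0`, `m, n ≥ 1`,
`h_n^{(r+1)}(m) = C(n+r, r) ∑_{i+j=m} (-1)^i ζ_r^⋆({1}_i) ζ_{n+r}({1}_j)`. -/
theorem gh_eq_binom_mul_sum (r m n : ℕ) (hm : 1 ≤ m) (hn : 1 ≤ n) :
    gh n (r + 1) m =
      (Nat.choose (n + r) r : ℝ) *
        ∑ i ∈ Finset.range (m + 1), (-1 : ℝ) ^ i * mhsn r i * mhn (n + r) (m - i) :=
  gh_eq_binom_mul_sum_general r m n
end
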